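/- arXiv:0705.2956 — 3 statements merged into one kernel-verified Lean document; each statement's English description precedes it below -/
import Mathlib

section
/- Let G be a group acting on sets M and Ω, let K ≤ G be a subgroup, let Φ : M → Ω be a G-equivariant map, and let D ⊆ Ω be a subset satisfying: (i) Φ(M) ⊆ G • D; (ii) for all ξ, ξ' ∈ D and g ∈ G, g • ξ = ξ' implies ξ = ξ'; (iii) for every ξ ∈ D the stabilizer G_ξ = {g ∈ G : g • ξ = ξ} is contained in K. Define N := Φ⁻¹(K • D). Then: (a) for every m ∈ M there exist g ∈ G and n ∈ N with m = g • n; and (b) whenever g • n = g' • n' with g, g' ∈ G and n, n' ∈ N, the element k := g'⁻¹ g lies in K, and one has g' = g k⁻¹ and n' = k • n. -/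
/-! If `g` carries a point of `K • D` to a point of `K • D`, then, writing the two points as
`k • d` and `k' • d'`, the element `k'⁻¹ g k` carries `d` to `d'`; hence `d = d'` because `D`
meets every orbit at most once, so `k'⁻¹ g k` stabilizes `d` and lies in `K`, and so does `g`.
Applied to `Φ n` and `Φ n' = g'⁻¹ g • Φ n` this gives uniqueness; existence is the hypothesis
`Φ(M) ⊆ G • D` pulled back along `Φ`. -/

open Pointwise

section CrossSection

variable {G M Ω : Type*} [Group G] [MulAction G M] [MulAction G Ω] {D : Set Ω}

theorem Subgroup.mem_of_smul_mem_smul_set (K : Subgroup G)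
    (h2 : ∀ ξ ∈ D, ∀ ξ' ∈ D, ∀ g : G, g • ξ = ξ' → ξ = ξ')
    (h3 : ∀ ξ ∈ D, ∀ g : G, g • ξ = ξ → g ∈ K)
    {g : G} {ξ : Ω} (hξ : ξ ∈ (K : Set G) • D) (hgξ : g • ξ ∈ (K : Set G) • D) : g ∈ K := by
  obtain ⟨k, hk, d, hd, rfl⟩ := Set.mem_smul.mp hξ
  obtain ⟨k', hk', d', hd', hd'_eq⟩ := Set.mem_smul.mp hgξ
  have hmove : (k'⁻¹ * g * k) • d = d' := by
    rw [mul_smul, mul_smul, hd'_eq.symm, inv_smul_smul]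
  obtain rfl : d = d' := h2 d hd d' hd' _ hmove
  have hstab : k'⁻¹ * g * k ∈ K := h3 d hd _ hmove
  have hg : g = k' * (k'⁻¹ * g * k) * k⁻¹ := by group
  rw [hg]
  exact K.mul_mem (K.mul_mem hk' hstab) (K.inv_mem hk)

theorem exists_eq_smul_of_map_mem_smul {Φ : M → Ω}
    (hΦ : ∀ (g : G) (m : M), Φ (g • m) = g • Φ m)
    (h1 : ∀ m : M, ∃ g : G, ∃ d ∈ D, Φ m = g • d) (m : M) :
    ∃ g : G, ∃ n ∈ Φ ⁻¹' D, m = g • n := by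
  obtain ⟨g, d, hd, hm⟩ := h1 m
  refine ⟨g, g⁻¹ • m, ?_, (smul_inv_smul g m).symm⟩
  rwa [Set.mem_preimage, hΦ, hm, inv_smul_smul]

end CrossSection

/-- Set-theoretic core of Proposition 2.12: with `D` a fundamental-domain-like subset of `Ω`
whose stabilizers lie in `K`, and `Φ : M → Ω` an equivariant map with image in `G • D`,
every point of `M` is of the form `g • n` with `n ∈ N := Φ⁻¹(K • D)`, and such a
representation is unique up to an element of `K`. -/
theorem induction_of_cross_section_bijective
    {G M Ω : Type*} [Group G] [MulAction G M] [MulAction G Ω]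
    (K : Subgroup G) (Φ : M → Ω)
    (hΦ : ∀ (g : G) (m : M), Φ (g • m) = g • Φ m)
    (D : Set Ω)
    (h1 : ∀ m : M, ∃ g : G, ∃ d ∈ D, Φ m = g • d)
    (h2 : ∀ ξ ∈ D, ∀ ξ' ∈ D, ∀ g : G, g • ξ = ξ' → ξ = ξ')
    (h3 : ∀ ξ ∈ D, ∀ g : G, g • ξ = ξ → g ∈ K)
    (N : Set M) (hN : N = {m : M | ∃ k ∈ K, ∃ d ∈ D, Φ m = k • d}) :
    (∀ m : M, ∃ g : G, ∃ n ∈ N, m = g • n) ∧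
    (∀ g g' : G, ∀ n n' : M, n ∈ N → n' ∈ N → g • n = g' • n' →
      g'⁻¹ * g ∈ K ∧ g' = g * (g'⁻¹ * g)⁻¹ ∧ n' = (g'⁻¹ * g) • n) := by
  replace hN : N = Φ ⁻¹' ((K : Set G) • D) := by
    ext m
    simp only [hN, Set.mem_ofPred_eq, Set.mem_preimage, Set.mem_smul, SetLike.mem_coe, eq_comm]
  subst hN
  refine ⟨fun m => ?_, fun g g' n n' hn hn' heq => ?_⟩
  · obtain ⟨g, n, hn, rfl⟩ := exists_eq_smul_of_map_mem_smul hΦ h1 m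
    exact ⟨g, n, Set.mem_smul.mpr ⟨1, K.one_mem, Φ n, hn, one_smul G _⟩, rfl⟩
  · have hn'_eq : n' = (g'⁻¹ * g) • n := by rw [mul_smul, heq, inv_smul_smul]
    have hK : g'⁻¹ * g ∈ K := by
      refine K.mem_of_smul_mem_smul_set h2 h3 hn ?_
      rw [← hΦ, ← hn'_eq]
      exact hn'
    exact ⟨hK, by group, hn'_eq⟩
end

section
/- Let g be a finite-dimensional Lie algebra over a field, let V be a vector space over the same field equipped with a bilinear form ω, let ρ : g → V and Φ' : V → g* be linear maps, and let ξ ∈ g*. Assume: (a) Φ'(v)(X) = ω(ρ(X), v) for all v ∈ V and X ∈ g; and (b) Φ'(ρ(X))(Y) = ξ([X, Y]) for all X, Y ∈ g. Set g_ξ := {X ∈ g : ξ([X, Y]) = 0 for all Y ∈ g} and g_m := ker ρ. Then (g_ξ)⁰ ⊆ range(Φ') ⊆ (g_m)⁰, where S⁰ := {η ∈ g* : η(X) = 0 for all X ∈ S} denotes the annihilator in g*. -/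
/-! The composite `Φ' ∘ ρ : 𝔤 → 𝔤*` is `X ↦ ξ([X, ·])`, an alternating form on `𝔤` whose kernel is
`𝔤_ξ`. For an alternating form in finite dimension, the range equals the annihilator of the kernel,
so `𝔤_ξ⁰ = range (Φ' ∘ ρ) ⊆ range Φ'`. -/

namespace LinearMap

variable {K V : Type*} [Field K] [AddCommGroup V] [Module K V]

theorem IsAlt.dualAnnihilator_ker_eq_range [Module.IsReflexive K V] {B : V →ₗ[K] V →ₗ[K] K}
    (hB : B.IsAlt) : (ker B).dualAnnihilator = range B := by
  have hflip : B.flip = -B := by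
    ext x y
    exact (hB.neg x y).symm
  rw [dualAnnihilator_ker_eq_range_flip, hflip, range_neg]

end LinearMap

/-- Lemma 2.8 (lem incl): for a momentum-map-like pair `(ρ, Φ')` at a point with value `ξ`,
the image of the tangent map `Φ'` is squeezed between the annihilator of the coadjoint
stabilizer `L_ξ` and the annihilator of the infinitesimal stabilizer `L_m = ker ρ`. -/
theorem momentum_map_tangent_image_inclusions
    {F L V : Type*} [Field F] [LieRing L] [LieAlgebra F L] [FiniteDimensional F L]
    [AddCommGroup V] [Module F V]
    (ω : V →ₗ[F] V →ₗ[F] F)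
    (ρ : L →ₗ[F] V) (Φ' : V →ₗ[F] Module.Dual F L)
    (ξ : Module.Dual F L)
    (ha : ∀ (v : V) (X : L), Φ' v X = ω (ρ X) v)
    (hb : ∀ X Y : L, Φ' (ρ X) Y = ξ ⁅X, Y⁆) :
    {η : Module.Dual F L | ∀ X : L, (∀ Y : L, ξ ⁅X, Y⁆ = 0) → η X = 0} ⊆ Set.range Φ' ∧
    Set.range Φ' ⊆ {η : Module.Dual F L | ∀ X : L, ρ X = 0 → η X = 0} := by
  have h_alt : (Φ'.comp ρ).IsAlt := fun X => by simp [hb]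
  have h_ker (X : L) : X ∈ LinearMap.ker (Φ'.comp ρ) ↔ ∀ Y, ξ ⁅X, Y⁆ = 0 := by
    simp [LinearMap.ext_iff, hb]
  refine ⟨fun η hη => ?_, ?_⟩
  · have hη' : η ∈ (LinearMap.ker (Φ'.comp ρ)).dualAnnihilator :=
      (Submodule.mem_dualAnnihilator η).2 fun X hX => hη X ((h_ker X).1 hX)
    rw [h_alt.dualAnnihilator_ker_eq_range] at hη'
    obtain ⟨X, rfl⟩ := hη'
    exact ⟨ρ X, rfl⟩
  · rintro _ ⟨v, rfl⟩ X hX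
    rw [ha, hX, map_zero, LinearMap.zero_apply]
end

section
/- Let g be a Lie algebra over a field with an internal direct sum decomposition g = k ⊕ p, where k is a Lie subalgebra and [k, p] ⊆ p. Let ξ ∈ g* vanish on p, set g_ξ := {X ∈ g : ξ([X, Y]) = 0 for all Y ∈ g}, and assume g_ξ ∩ p = {0}. Let V be a vector space over the same field with a bilinear form ω, and let ρ : g → V and Φ' : V → g* be linear maps satisfying (a) Φ'(v)(X) = ω(ρ(X), v) for all v ∈ V, X ∈ g, and (b) Φ'(ρ(X))(Y) = ξ([X, Y]) for all X, Y ∈ g. Let p⁰ := {η ∈ g* : η(p) = 0} and W := (Φ')⁻¹(p⁰) ⊆ V. Then: (i) W ∩ ρ(p) = {0}; (ii) ω(ρ(X), w) = 0 for all X ∈ p and w ∈ W; and (iii) if moreover ω is alternating and nondegenerate on V and V = W + ρ(p), then the restrictions of ω to W and to ρ(p) are nondegenerate. -/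
/-!
Part (ii) is the momentum map identity `Φ'(w)(X) = ω(ρ X, w)` read on `W`. For (i), if `ρ X ∈ W`
with `X ∈ p` then `ξ ⁅X, Y⁆ = Φ'(ρ X)(Y)` vanishes for `Y ∈ p`, and for `Y ∈ k` because
`⁅Y, X⁆ ∈ p` and `ξ` kills `p`; as `g = k + p`, `X` lies in the stabilizer `g_ξ`, so `X = 0`.
Part (iii): `V = W + ρ(p)` with `W` and `ρ(p)` symplectically orthogonal, so a vector of either
summand that is orthogonal to its own summand is orthogonal to all of `V`.
-/

theorem dual_lie_eq_zero_of_forall_mem {R L : Type*} [CommRing R] [LieRing L] [LieAlgebra R L]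
    {k p : Submodule R L} (hsum : k ⊔ p = ⊤) (hkp : ∀ X ∈ k, ∀ Y ∈ p, ⁅X, Y⁆ ∈ p)
    {ξ : Module.Dual R L} (hξ : ∀ Y ∈ p, ξ Y = 0) {X : L} (hX : X ∈ p)
    (h : ∀ Y ∈ p, ξ ⁅X, Y⁆ = 0) (Y : L) : ξ ⁅X, Y⁆ = 0 := by
  have hk : k ≤ LinearMap.ker (ξ ∘ₗ LieAlgebra.ad R L X) := fun Z hZ => by
    simp only [LinearMap.mem_ker, LinearMap.comp_apply, LieAlgebra.ad_apply, ← lie_skew X Z,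
      map_neg, hξ _ (hkp Z hZ X hX), neg_zero]
  have hp : p ≤ LinearMap.ker (ξ ∘ₗ LieAlgebra.ad R L X) := fun Z hZ => by simpa using h Z hZ
  have hker : ⊤ ≤ LinearMap.ker (ξ ∘ₗ LieAlgebra.ad R L X) := hsum ▸ sup_le hk hp
  simpa using hker (Submodule.mem_top (x := Y))

section OrthogonalSum

variable {R V : Type*} [CommRing R] [AddCommGroup V] [Module R V] {ω : V →ₗ[R] V →ₗ[R] R}
  {A B : Set V}

theorem LinearMap.SeparatingLeft.eq_zero_of_forall_mem (hω : ω.SeparatingLeft)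
    (hAB : ∀ a ∈ A, ∀ b ∈ B, ω a b = 0) (hV : ∀ v, ∃ a ∈ A, ∃ b ∈ B, v = a + b)
    {a : V} (ha : a ∈ A) (hperp : ∀ a' ∈ A, ω a a' = 0) : a = 0 := by
  refine hω a fun v => ?_
  obtain ⟨a', ha', b, hb, rfl⟩ := hV v
  rw [map_add, hperp a' ha', hAB a ha b hb, add_zero]

theorem LinearMap.IsAlt.eq_zero_of_forall_mem_right (halt : ω.IsAlt) (hω : ω.SeparatingLeft)
    (hAB : ∀ a ∈ A, ∀ b ∈ B, ω a b = 0) (hV : ∀ v, ∃ a ∈ A, ∃ b ∈ B, v = a + b)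
    {b : V} (hb : b ∈ B) (hperp : ∀ b' ∈ B, ω b b' = 0) : b = 0 := by
  refine hω.eq_zero_of_forall_mem (A := B) (B := A) ?_ ?_ hb hperp
  · intro b hb a ha
    rw [← halt.neg, hAB a ha b hb, neg_zero]
  · intro v
    obtain ⟨a, ha, b, hb, rfl⟩ := hV v
    exact ⟨b, hb, a, ha, add_comm a b⟩

end OrthogonalSum

theorem hamiltonian_cross_section_linear_algebra_general
    {F L V : Type*} [Field F] [LieRing L] [LieAlgebra F L]
    [AddCommGroup V] [Module F V]
    (k : LieSubalgebra F L) (p : Submodule F L)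
    (hsum : k.toSubmodule ⊔ p = ⊤)
    (hkp : ∀ X ∈ k, ∀ Y ∈ p, ⁅X, Y⁆ ∈ p)
    (ξ : Module.Dual F L) (hξ : ∀ Y ∈ p, ξ Y = 0)
    (hstab : ∀ X ∈ p, (∀ Y : L, ξ ⁅X, Y⁆ = 0) → X = 0)
    (ω : V →ₗ[F] V →ₗ[F] F)
    (ρ : L →ₗ[F] V) (Φ' : V →ₗ[F] Module.Dual F L)
    (ha : ∀ (v : V) (X : L), Φ' v X = ω (ρ X) v)
    (hb : ∀ X Y : L, Φ' (ρ X) Y = ξ ⁅X, Y⁆)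
    (W : Set V) (hW : W = {v : V | ∀ X ∈ p, Φ' v X = 0}) :
    (∀ X ∈ p, ρ X ∈ W → ρ X = 0) ∧
    (∀ X ∈ p, ∀ w ∈ W, ω (ρ X) w = 0) ∧
    ((∀ v : V, ω v v = 0) → (∀ v : V, (∀ u : V, ω v u = 0) → v = 0) →
      (∀ v : V, ∃ w ∈ W, ∃ X ∈ p, v = w + ρ X) →
      ((∀ w ∈ W, (∀ w' ∈ W, ω w w' = 0) → w = 0) ∧
       (∀ X ∈ p, (∀ Y ∈ p, ω (ρ X) (ρ Y) = 0) → ρ X = 0))) := by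
  subst hW
  have hortho : ∀ a ∈ ρ '' p, ∀ w ∈ {v : V | ∀ X ∈ p, Φ' v X = 0}, ω a w = 0 := by
    rintro _ ⟨X, hX, rfl⟩ w hw
    exact ha w X ▸ hw X hX
  refine ⟨fun X hX hρX => ?_, fun X hX => hortho _ ⟨X, hX, rfl⟩, fun halt hsep hV => ?_⟩
  · rw [hstab X hX (dual_lie_eq_zero_of_forall_mem hsum hkp hξ hX fun Y hY => hb X Y ▸ hρX Y hY),
      map_zero]
  have hV' : ∀ v, ∃ a ∈ ρ '' p, ∃ w ∈ {v : V | ∀ X ∈ p, Φ' v X = 0}, v = a + w := by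
    intro v
    obtain ⟨w, hw, X, hX, rfl⟩ := hV v
    exact ⟨ρ X, ⟨X, hX, rfl⟩, w, hw, add_comm w (ρ X)⟩
  exact ⟨fun w hw => LinearMap.IsAlt.eq_zero_of_forall_mem_right halt hsep hortho hV' hw,
    fun X hX hperp => LinearMap.SeparatingLeft.eq_zero_of_forall_mem hsep hortho hV'
      ⟨X, hX, rfl⟩ (Set.forall_mem_image.2 hperp)⟩

/-- Linear-algebraic content of Proposition 2.5 (the Hamiltonian cross-section theorem):
with `L = k ⊕ p` a direct sum, `[k, p] ⊆ p`, `ξ` vanishing on `p` with coadjoint stabilizer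
meeting `p` trivially, and `(ρ, Φ')` a momentum-map-like pair with value `ξ`, the subspace
`W = Φ'⁻¹(p⁰)` satisfies: (i) `W ∩ ρ(p) = {0}`; (ii) `W` and `ρ(p)` are symplectically
orthogonal; (iii) if moreover `ω` is alternating and nondegenerate and `V = W + ρ(p)`, then
the restrictions of `ω` to `W` and to `ρ(p)` are nondegenerate. -/
theorem hamiltonian_cross_section_linear_algebra
    {F L V : Type*} [Field F] [LieRing L] [LieAlgebra F L]
    [AddCommGroup V] [Module F V]
    (k : LieSubalgebra F L) (p : Submodule F L)
    (hsum : k.toSubmodule ⊔ p = ⊤) (hinf : k.toSubmodule ⊓ p = ⊥)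
    (hkp : ∀ X ∈ k, ∀ Y ∈ p, ⁅X, Y⁆ ∈ p)
    (ξ : Module.Dual F L) (hξ : ∀ Y ∈ p, ξ Y = 0)
    (hstab : ∀ X ∈ p, (∀ Y : L, ξ ⁅X, Y⁆ = 0) → X = 0)
    (ω : V →ₗ[F] V →ₗ[F] F)
    (ρ : L →ₗ[F] V) (Φ' : V →ₗ[F] Module.Dual F L)
    (ha : ∀ (v : V) (X : L), Φ' v X = ω (ρ X) v)
    (hb : ∀ X Y : L, Φ' (ρ X) Y = ξ ⁅X, Y⁆)
    (W : Set V) (hW : W = {v : V | ∀ X ∈ p, Φ' v X = 0}) :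
    (∀ X ∈ p, ρ X ∈ W → ρ X = 0) ∧
    (∀ X ∈ p, ∀ w ∈ W, ω (ρ X) w = 0) ∧
    ((∀ v : V, ω v v = 0) → (∀ v : V, (∀ u : V, ω v u = 0) → v = 0) →
      (∀ v : V, ∃ w ∈ W, ∃ X ∈ p, v = w + ρ X) →
      ((∀ w ∈ W, (∀ w' ∈ W, ω w w' = 0) → w = 0) ∧
       (∀ X ∈ p, (∀ Y ∈ p, ω (ρ X) (ρ Y) = 0) → ρ X = 0))) :=
  hamiltonian_cross_section_linear_algebra_general k p hsum hkp ξ hξ hstab ω ρ Φ' ha hb W hW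
end
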